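/- (Antinormal ordering of a three-fold product.) In the Clifford algebra C(V_ℂ), for all x, y, z ∈ V one has (1/(2√2))(x⁻ y⁻ z⁻ + x⁻ y⁻ z⁺ − x⁻ z⁻ y⁺ + y⁻ z⁻ x⁺ + x⁻ y⁺ z⁺ − y⁻ x⁺ z⁺ + z⁻ x⁺ y⁺ + x⁺ y⁺ z⁺) = x y z − ⟨z|y⟩_J · x + ⟨z|x⟩_J · y − ⟨y|x⟩_J · z. -/

import Mathlib

noncomputable section
open TensorProduct ComplexConjugate

variable (V : Type*) [NormedAddCommGroup V] [InnerProductSpace ℝ V]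

/-- The complexification `V_ℂ = ℂ ⊗[ℝ] V` of a real inner product space `V`. -/
abbrev Complexification : Type _ := ℂ ⊗[ℝ] V

variable {V}

/-- The canonical embedding of `V` into its complexification. -/
def incl (v : V) : Complexification V := (1 : ℂ) ⊗ₜ[ℝ] v

/-- The canonical conjugation `w ↦ w̄` on the complexification. -/
def conjC : Complexification V →ₗ[ℝ] Complexification V :=
  TensorProduct.map Complex.conjAe.toLinearMap LinearMap.id

variable (V)

/-- The complex-bilinear extension `(·|·)` of the real inner product to the complexification. -/
def bilinC : LinearMap.BilinForm ℂ (Complexification V) :=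
  LinearMap.BilinForm.baseChange ℂ (innerₗ V)

/-- The quadratic form `z ↦ (z|z)` on the complexification; `C(V_ℂ)` is its Clifford algebra. -/
def quadC : QuadraticForm ℂ (Complexification V) :=
  LinearMap.BilinMap.toQuadraticMap (bilinC V)

variable {V}

/-- The hermitian inner product `⟨x|y⟩ = (x̄|y)` on the complexification. -/
def hermC (x y : Complexification V) : ℂ := bilinC V (conjC x) y

/-- `⟨x|y⟩_J = (x|y) + i (Jx|y)`. -/
def innerJ (J : V →ₗ[ℝ] V) (x y : V) : ℂ :=
  ((inner ℝ x y : ℝ) : ℂ) + Complex.I * ((inner ℝ (J x) y : ℝ) : ℂ)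

/-- `v⁺ = (v - iJv)/√2`. -/
def plusPart (J : V →ₗ[ℝ] V) (v : V) : Complexification V :=
  ((Real.sqrt 2 : ℂ))⁻¹ • (incl v - Complex.I • incl (J v))

/-- `v⁻ = (v + iJv)/√2`. -/
def minusPart (J : V →ₗ[ℝ] V) (v : V) : Complexification V :=
  ((Real.sqrt 2 : ℂ))⁻¹ • (incl v + Complex.I • incl (J v))

local notation "𝔠" => CliffordAlgebra.ι (quadC V)

lemma bilinC_incl_incl (u w : V) :
    bilinC V (incl u) (incl w) = ((inner ℝ u w : ℝ) : ℂ) := by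
  simp [bilinC, incl, LinearMap.BilinForm.baseChange_tmul, Complex.real_smul]

lemma sq2 : ((Real.sqrt 2 : ℝ) : ℂ) ^ 2 = 2 := by
  norm_cast
  exact_mod_cast Real.sq_sqrt (by norm_num)

lemma sqrt2C_ne_zero : ((Real.sqrt 2 : ℝ) : ℂ) ≠ 0 := by
  simp [Real.sqrt_eq_zero']

lemma hss : ((Real.sqrt 2 : ℝ) : ℂ)⁻¹ ^ 2 = (2:ℂ)⁻¹ := by
  rw [inv_pow, sq2]

lemma polar_quadC (u w : Complexification V) :
    QuadraticMap.polar (quadC V) u w = bilinC V u w + bilinC V w u :=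
  LinearMap.BilinMap.polar_toQuadraticMap u w

section
variable (J : V →ₗ[ℝ] V) (hJ2 : ∀ v, J (J v) = -v)
  (hJo : ∀ x y : V, (inner ℝ (J x) (J y) : ℝ) = inner ℝ x y)

include hJ2 hJo in
lemma skewJ (u w : V) : (inner ℝ (J u) w : ℝ) = - inner ℝ u (J w) := by
  have h := hJo u (J w)
  rw [hJ2 w, inner_neg_right] at h
  linarith

include hJ2 hJo in
lemma bilin_pm (u w : V) :
    bilinC V (plusPart J u) (minusPart J w) = innerJ J w u := by
  simp only [plusPart, minusPart, map_smul, map_add, map_sub, LinearMap.smul_apply,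
    LinearMap.add_apply, LinearMap.sub_apply, smul_eq_mul, bilinC_incl_incl]
  rw [innerJ, skewJ J hJ2 hJo u w, hJo u w, real_inner_comm w u, real_inner_comm (J w) u,
    skewJ J hJ2 hJo w u]
  push_cast
  ring_nf
  rw [hss]
  ring_nf
  linear_combination (((inner ℝ w u : ℝ):ℂ) * (-1/2)) * Complex.I_sq

include hJ2 hJo in
lemma bilin_mp (u w : V) :
    bilinC V (minusPart J u) (plusPart J w) = innerJ J u w := by
  simp only [plusPart, minusPart, map_smul, map_add, map_sub, LinearMap.smul_apply,
    LinearMap.add_apply, LinearMap.sub_apply, smul_eq_mul, bilinC_incl_incl]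
  rw [innerJ, skewJ J hJ2 hJo u w, hJo u w]
  push_cast
  ring_nf
  rw [hss]
  ring_nf
  linear_combination (((inner ℝ u w : ℝ):ℂ) * (-1/2)) * Complex.I_sq

include hJ2 hJo in
lemma cliff_cross (u w : V) :
    CliffordAlgebra.ι (quadC V) (plusPart J u) * CliffordAlgebra.ι (quadC V) (minusPart J w) =
      (2 * innerJ J w u) • (1 : CliffordAlgebra (quadC V)) -
        CliffordAlgebra.ι (quadC V) (minusPart J w) *
          CliffordAlgebra.ι (quadC V) (plusPart J u) := by
  rw [CliffordAlgebra.ι_mul_ι_comm, polar_quadC, bilin_pm J hJ2 hJo u w,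
    bilin_mp J hJ2 hJo w u, ← two_mul, Algebra.algebraMap_eq_smul_one]
end

lemma incl_eq_parts (J : V →ₗ[ℝ] V) (v : V) :
    incl v = (((Real.sqrt 2 : ℝ) : ℂ)/2) • (minusPart J v + plusPart J v) := by
  have h0 : ((Real.sqrt 2 : ℝ) : ℂ) ≠ 0 := sqrt2C_ne_zero
  rw [minusPart, plusPart]
  match_scalars <;> (field_simp; try ring)

set_option maxHeartbeats 2000000 in
/-- antinormal ordering of a three-fold product: in `C(V_ℂ)`,
`(1/(2√2))(x⁻y⁻z⁻ + x⁻y⁻z⁺ − x⁻z⁻y⁺ + y⁻z⁻x⁺ + x⁻y⁺z⁺ − y⁻x⁺z⁺ + z⁻x⁺y⁺ + x⁺y⁺z⁺)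
  = xyz − ⟨z|y⟩_J x + ⟨z|x⟩_J y − ⟨y|x⟩_J z`. -/
theorem antinormal_order_three
    [FiniteDimensional ℝ V] (J : V →ₗ[ℝ] V)
    (hJ2 : ∀ v, J (J v) = -v)
    (hJo : ∀ x y : V, (inner ℝ (J x) (J y) : ℝ) = inner ℝ x y) :
    ∀ x y z : V,
      ((2 * Real.sqrt 2 : ℝ) : ℂ)⁻¹ •
        (𝔠 (minusPart J x) * 𝔠 (minusPart J y) * 𝔠 (minusPart J z) +
         𝔠 (minusPart J x) * 𝔠 (minusPart J y) * 𝔠 (plusPart J z) -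
         𝔠 (minusPart J x) * 𝔠 (minusPart J z) * 𝔠 (plusPart J y) +
         𝔠 (minusPart J y) * 𝔠 (minusPart J z) * 𝔠 (plusPart J x) +
         𝔠 (minusPart J x) * 𝔠 (plusPart J y) * 𝔠 (plusPart J z) -
         𝔠 (minusPart J y) * 𝔠 (plusPart J x) * 𝔠 (plusPart J z) +
         𝔠 (minusPart J z) * 𝔠 (plusPart J x) * 𝔠 (plusPart J y) +
         𝔠 (plusPart J x) * 𝔠 (plusPart J y) * 𝔠 (plusPart J z)) =
      𝔠 (incl x) * 𝔠 (incl y) * 𝔠 (incl z) -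
        innerJ J z y • 𝔠 (incl x) +
        innerJ J z x • 𝔠 (incl y) -
        innerJ J y x • 𝔠 (incl z) := by
  intro x y z
  have hs0 : ((Real.sqrt 2 : ℝ) : ℂ) ≠ 0 := sqrt2C_ne_zero
  have hs2 : ((Real.sqrt 2 : ℝ) : ℂ) ^ 2 = 2 := sq2
  have hcast : ((2 * Real.sqrt 2 : ℝ) : ℂ) = 2 * ((Real.sqrt 2 : ℝ) : ℂ) := by push_cast; ring
  set s : ℂ := ((Real.sqrt 2 : ℝ) : ℂ) with hsdef
  set P : ℂ := innerJ J z y with hP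
  set Q : ℂ := innerJ J y x with hQ
  set R : ℂ := innerJ J z x with hR
  set a := 𝔠 (minusPart J x) with ha
  set b := 𝔠 (minusPart J y) with hb
  set c := 𝔠 (minusPart J z) with hc
  set a' := 𝔠 (plusPart J x) with ha'
  set b' := 𝔠 (plusPart J y) with hb'
  set c' := 𝔠 (plusPart J z) with hc'
  have Hab : a' * b = (2 * Q) • 1 - b * a' := cliff_cross J hJ2 hJo x y
  have Hac : a' * c = (2 * R) • 1 - c * a' := cliff_cross J hJ2 hJo x z
  have Hbc : b' * c = (2 * P) • 1 - c * b' := cliff_cross J hJ2 hJo y z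
  have hX : 𝔠 (incl x) = (s/2) • (a + a') := by
    rw [incl_eq_parts J x, map_smul, map_add, ha, ha']
  have hY : 𝔠 (incl y) = (s/2) • (b + b') := by
    rw [incl_eq_parts J y, map_smul, map_add, hb, hb']
  have hZ : 𝔠 (incl z) = (s/2) • (c + c') := by
    rw [incl_eq_parts J z, map_smul, map_add, hc, hc']
  have h1 : a * (b' * c) = (2 * P) • a - a * (c * b') := by
    rw [Hbc, mul_sub, mul_smul_comm, mul_one]
  have h2 : a' * (b * c) = (2 * Q) • c - (2 * R) • b + b * (c * a') := by
    calc a' * (b * c) = (a' * b) * c := (mul_assoc _ _ _).symm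
      _ = ((2 * Q) • 1 - b * a') * c := by rw [Hab]
      _ = (2 * Q) • c - b * (a' * c) := by
          rw [sub_mul, smul_mul_assoc, one_mul, mul_assoc]
      _ = (2 * Q) • c - b * ((2 * R) • 1 - c * a') := by rw [Hac]
      _ = (2 * Q) • c - (2 * R) • b + b * (c * a') := by
          rw [mul_sub, mul_smul_comm, mul_one]; abel
  have h3 : a' * (b * c') = (2 * Q) • c' - b * (a' * c') := by
    calc a' * (b * c') = (a' * b) * c' := (mul_assoc _ _ _).symm
      _ = ((2 * Q) • 1 - b * a') * c' := by rw [Hab]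
      _ = (2 * Q) • c' - b * (a' * c') := by
          rw [sub_mul, smul_mul_assoc, one_mul, mul_assoc]
  have h4 : a' * (b' * c) = (2 * P) • a' - (2 * R) • b' + c * (a' * b') := by
    calc a' * (b' * c) = a' * ((2 * P) • 1 - c * b') := by rw [Hbc]
      _ = (2 * P) • a' - (a' * c) * b' := by
          rw [mul_sub, mul_smul_comm, mul_one, mul_assoc]
      _ = (2 * P) • a' - ((2 * R) • 1 - c * a') * b' := by rw [Hac]
      _ = (2 * P) • a' - (2 * R) • b' + c * (a' * b') := by
          rw [sub_mul, smul_mul_assoc, one_mul, mul_assoc]; abel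
  have expand : (a + a') * ((b + b') * (c + c')) =
      a * (b * c) + a * (b * c') + a * (b' * c) + a * (b' * c') +
      a' * (b * c) + a' * (b * c') + a' * (b' * c) + a' * (b' * c') := by
    noncomm_ring
  rw [hX, hY, hZ, hcast]
  simp only [smul_mul_assoc, mul_smul_comm, smul_smul, mul_assoc]
  rw [expand, h1, h2, h3, h4]
  match_scalars <;> (field_simp; ring_nf) <;>
    first
      | linear_combination (-2*s^2 - 4) * hs2
      | linear_combination (-4*s*P) * hs2
      | linear_combination (-4*s*Q) * hs2
      | linear_combination (4*s*R) * hs2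
      | linear_combination (-(s^2+2)) * hs2
      | linear_combination (s^2+2) * hs2
      | linear_combination (-s*P) * hs2
      | linear_combination (-s*Q) * hs2
      | linear_combination (s*R) * hs2
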